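/- The set of k Chebyshev points cos((2j-1)π/(2k)), j = 1,…,k, with k = mn and m > 1 an integer, is a norming set for polynomials of degree ≤ n on [-1,1] with constant c_m = 1/cos(π/(2m)): for every real polynomial p of degree at most n, max_{x ∈ [-1,1]} |p(x)| ≤ c_m · max_{j} |p(cos((2j-1)π/(2mn)))|. -/

import Mathlib

/-!
Put `x = cos θ`. Then `t(θ) = p(cos θ)` is a trigonometric polynomial of degree at most `n`, and
if `|t|` attains its maximum `S` at `θ₀`, then `|t(θ₀ + δ)| ≥ S cos(nδ)` for `|δ| < π/n`.
Otherwise a slightly raised and shifted wave `A cos(n(θ - τ)) - t(θ)` would change sign `2n + 1`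
times within less than a period, which is impossible because `e^{inθ} (A cos(n(θ - τ)) - t(θ))` is
a polynomial of degree `2n` in `e^{iθ}`. Every `θ₀ ∈ [0, π]` lies within `π/(2mn)` of a Chebyshev
angle `(2j + 1)π/(2mn)`, at which therefore `|p| ≥ S cos(π/(2m))`.
-/

open Real Polynomial Set Filter Topology

lemma exists_mem_Ioo_eq_zero_of_mul_neg {g : ℝ → ℝ} {a b : ℝ} (hab : a ≤ b)
    (hg : ContinuousOn g (Icc a b)) (h : g a * g b < 0) : ∃ r ∈ Ioo a b, g r = 0 := by
  rcases mul_neg_iff.mp h with ⟨ha, hb⟩ | ⟨ha, hb⟩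
  · exact intermediate_value_Ioo' hab hg ⟨hb, ha⟩
  · exact intermediate_value_Ioo hab hg ⟨ha, hb⟩

lemma exists_finset_card_eq_of_sign_changes {g : ℝ → ℝ} (hg : Continuous g) {c : ℕ → ℝ}
    (hc : StrictMono c) (N : ℕ) (hsign : ∀ i < N, g (c i) * g (c (i + 1)) < 0) :
    ∃ s : Finset ℝ, s.card = N ∧ ↑s ⊆ Ioo (c 0) (c N) ∧ ∀ x ∈ s, g x = 0 := by
  induction N with
  | zero => exact ⟨∅, by simp⟩
  | succ N ih =>
    obtain ⟨s, hcard, hs, hzero⟩ := ih fun i hi ↦ hsign i (by omega)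
    obtain ⟨r, hr, hgr⟩ := exists_mem_Ioo_eq_zero_of_mul_neg (hc N.lt_succ_self).le
      hg.continuousOn (hsign N N.lt_succ_self)
    have hrs : r ∉ s := fun h ↦ (hs h).2.not_gt hr.1
    refine ⟨insert r s, by rw [Finset.card_insert_of_notMem hrs, hcard], ?_, ?_⟩
    · rw [Finset.coe_insert, insert_subset_iff]
      exact ⟨⟨(hc.monotone N.zero_le).trans_lt hr.1, hr.2⟩,
        hs.trans (Ioo_subset_Ioo_right (hc N.lt_succ_self).le)⟩
    · simpa [hgr] using hzero

lemma neg_one_pow_mul_sub_pos {n : ℕ} (hn : 0 < n) {f : ℝ → ℝ} {S A : ℝ}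
    (hS : ∀ x, |f x| ≤ S) (hA : S < A) (τ : ℝ) (j : ℕ) :
    0 < (-1) ^ j * (A * cos (n * (τ + j * (π / n) - τ)) - f (τ + j * (π / n))) := by
  have hcos : cos (n * (τ + j * (π / n) - τ)) = (-1) ^ j := by
    rw [← cos_nat_mul_pi]
    congr 1
    field_simp
    ring
  have := abs_le.mp (hS (τ + j * (π / n)))
  rw [hcos]
  rcases neg_one_pow_eq_or ℝ j with h | h <;> rw [h] <;> linarith

/-- Real trigonometric polynomials of degree at most `n`, encoded by
`e^{inθ} f(θ) = G(e^{iθ})` for a complex polynomial `G` of degree at most `2n`. -/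
def trigPolyDegreeLE (n : ℕ) : Submodule ℝ (ℝ → ℝ) where
  carrier := {f | ∃ G : ℂ[X], G.natDegree ≤ 2 * n ∧
    ∀ θ, G.eval (Circle.exp θ : ℂ) = (Circle.exp θ : ℂ) ^ n * f θ}
  zero_mem' := ⟨0, by simp⟩
  add_mem' := by
    rintro f g ⟨F, hFdeg, hF⟩ ⟨G, hGdeg, hG⟩
    exact ⟨F + G, (natDegree_add_le _ _).trans (max_le hFdeg hGdeg),
      fun θ ↦ by simp only [eval_add, hF, hG, Pi.add_apply, Complex.ofReal_add, mul_add]⟩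
  smul_mem' := by
    rintro c f ⟨F, hFdeg, hF⟩
    exact ⟨C (c : ℂ) * F, (natDegree_C_mul_le _ _).trans hFdeg, fun θ ↦ by
      simp only [eval_mul, eval_C, hF, Pi.smul_apply, smul_eq_mul, Complex.ofReal_mul]; ring⟩

namespace trigPolyDegreeLE

lemma mono : Monotone trigPolyDegreeLE := by
  intro m n hmn f ⟨G, hGdeg, hG⟩
  refine ⟨G * X ^ (n - m), ?_, fun θ ↦ ?_⟩
  · refine natDegree_mul_le.trans ?_
    rw [natDegree_X_pow]
    omega
  · rw [eval_mul, hG, eval_pow, eval_X, mul_right_comm, ← pow_add, Nat.add_sub_cancel' hmn]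

lemma one_mem : (1 : ℝ → ℝ) ∈ trigPolyDegreeLE 0 :=
  ⟨1, by simp⟩

lemma mul_mem {m n : ℕ} {f g : ℝ → ℝ} (hf : f ∈ trigPolyDegreeLE m)
    (hg : g ∈ trigPolyDegreeLE n) : f * g ∈ trigPolyDegreeLE (m + n) := by
  obtain ⟨F, hFdeg, hF⟩ := hf
  obtain ⟨G, hGdeg, hG⟩ := hg
  refine ⟨F * G, natDegree_mul_le.trans (by omega), fun θ ↦ ?_⟩
  simp only [eval_mul, hF, hG, Pi.mul_apply, Complex.ofReal_mul]
  ring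

lemma pow_mem {n : ℕ} {f : ℝ → ℝ} (hf : f ∈ trigPolyDegreeLE n) (k : ℕ) :
    f ^ k ∈ trigPolyDegreeLE (k * n) := by
  induction k with
  | zero => simpa using one_mem
  | succ k ih => simpa [pow_succ, add_mul] using mul_mem ih hf

lemma cos_mem : cos ∈ trigPolyDegreeLE 1 := by
  refine ⟨C (1 / 2) * (X ^ 2 + 1), ?_, fun θ ↦ ?_⟩
  · refine (natDegree_C_mul_le _ _).trans ?_
    compute_degree!
  · simp only [eval_mul, eval_C, eval_add, eval_pow, eval_X, eval_one, Circle.coe_exp,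
      Complex.ofReal_cos, Complex.cos, neg_mul, Complex.exp_neg]
    field_simp

lemma cos_mul_sub_mem (n : ℕ) (τ : ℝ) :
    (fun θ ↦ cos (n * (θ - τ))) ∈ trigPolyDegreeLE n := by
  refine ⟨C (Complex.exp (-(n * τ) * Complex.I) / 2) * X ^ (2 * n) +
    C (Complex.exp (n * τ * Complex.I) / 2), by compute_degree, fun θ ↦ ?_⟩
  simp only [eval_mul, eval_C, eval_add, eval_pow, eval_X, Circle.coe_exp]
  rw [Complex.ofReal_cos, Complex.cos, ← Complex.exp_nat_mul, ← Complex.exp_nat_mul,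
    ← mul_div_assoc, mul_add, ← Complex.exp_add, ← Complex.exp_add, div_mul_eq_mul_div,
    ← Complex.exp_add]
  push_cast
  ring_nf

lemma eval_cos_mem {p : ℝ[X]} {n : ℕ} (hp : p.natDegree ≤ n) :
    (fun θ ↦ p.eval (cos θ)) ∈ trigPolyDegreeLE n := by
  have hsum : (fun θ ↦ p.eval (cos θ)) = ∑ i ∈ Finset.range (n + 1), p.coeff i • cos ^ i := by
    ext θ
    simp [eval_eq_sum_range' (Nat.lt_succ_of_le hp)]
  rw [hsum]
  refine Submodule.sum_mem _ fun i hi ↦ Submodule.smul_mem _ _ ?_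
  exact mono (by simpa [Nat.lt_succ_iff] using hi) (by simpa using pow_mem cos_mem i)

lemma continuous {n : ℕ} {f : ℝ → ℝ} (hf : f ∈ trigPolyDegreeLE n) : Continuous f := by
  obtain ⟨G, -, hG⟩ := hf
  have hf_eq : f = fun θ ↦ (((Circle.exp θ)⁻¹ ^ n : Circle) * G.eval (Circle.exp θ : ℂ)).re := by
    ext θ
    rw [hG]
    simp
  rw [hf_eq]
  fun_prop

lemma eq_zero_of_card_lt {n : ℕ} {f : ℝ → ℝ} (hf : f ∈ trigPolyDegreeLE n) {a : ℝ}
    {s : Finset ℝ} (hs : ↑s ⊆ Ico a (a + 2 * π)) (hzero : ∀ x ∈ s, f x = 0)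
    (hcard : 2 * n < s.card) : f = 0 := by
  obtain ⟨G, hGdeg, hG⟩ := hf
  have hinj : InjOn (fun θ ↦ (Circle.exp θ : ℂ)) s :=
    Subtype.val_injective.comp_injOn ((Circle.exp_injOn_Ico (by simp)).mono hs)
  have hG0 : G = 0 := by
    refine eq_zero_of_natDegree_lt_card_of_eval_eq_zero' G (s.image fun θ ↦ (Circle.exp θ : ℂ))
      ?_ ?_
    · simp only [Finset.mem_image, forall_exists_index, and_imp]
      rintro _ θ hθ rfl
      rw [hG, hzero θ hθ]
      simp
    · rw [Finset.card_image_of_injOn hinj]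
      omega
  ext θ
  simpa [hG0] using hG θ

lemma not_forall_neg_one_pow_mul_pos {n : ℕ} {g : ℝ → ℝ} (hg : g ∈ trigPolyDegreeLE n)
    {c : ℕ → ℝ} (hc : StrictMono c) (hspan : c (2 * n + 1) ≤ c 0 + 2 * π) :
    ¬ ∀ i ≤ 2 * n + 1, 0 < (-1) ^ i * g (c i) := by
  intro hsign
  obtain ⟨s, hcard, hs, hzero⟩ := exists_finset_card_eq_of_sign_changes
    (trigPolyDegreeLE.continuous hg) hc (2 * n + 1) fun i hi ↦ by
      have h₀ := hsign i (by omega)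
      have h₁ := hsign (i + 1) (by omega)
      rw [pow_succ] at h₁
      rcases neg_one_pow_eq_or ℝ i with h | h <;> rw [h] at h₀ h₁ <;> nlinarith
  have hg0 := eq_zero_of_card_lt hg
    (hs.trans (Ioo_subset_Ico_self.trans (Ico_subset_Ico_right hspan))) hzero (by omega)
  simpa [hg0] using hsign 0 (by omega)

lemma mul_cos_add_le_apply_add {n : ℕ} (hn : 0 < n) {f : ℝ → ℝ}
    (hf : f ∈ trigPolyDegreeLE n) {S A θ δ ρ : ℝ} (hS : ∀ x, |f x| ≤ S) (hθ : f θ = S)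
    (hA : S < A) (hAρ : A * cos (n * ρ) < S) (hρ : 0 < ρ) (hδ : 0 < δ) (hδρ : δ + ρ < π / n) :
    A * cos (n * (δ + ρ)) ≤ f (θ + δ) := by
  by_contra! hlt
  set τ := θ - ρ with hτ
  set g : ℝ → ℝ := A • (fun x ↦ cos (n * (x - τ))) - f with hg
  have hwave (j : ℕ) : 0 < (-1) ^ j * g (τ + j * (π / n)) :=
    neg_one_pow_mul_sub_pos hn hS hA τ j
  -- `g` is positive at `τ`, negative at `θ`, positive at `θ + δ`, and then alternates in sign
  -- at the extrema `τ + kπ/n` of the wave.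
  let c : ℕ → ℝ
    | 0 => τ
    | 1 => θ
    | 2 => θ + δ
    | k + 3 => τ + (k + 1 : ℕ) * (π / n)
  have hc : StrictMono c := by
    refine strictMono_nat_of_lt_succ fun k ↦ ?_
    match k with
    | 0 => show τ < θ; linarith
    | 1 => show θ < θ + δ; linarith
    | 2 => show θ + δ < τ + (0 + 1 : ℕ) * (π / n); push_cast; linarith
    | k + 3 =>
      show τ + (k + 1 : ℕ) * (π / n) < τ + (k + 1 + 1 : ℕ) * (π / n)
      push_cast; linarith
  have hgT : g ∈ trigPolyDegreeLE n := sub_mem (Submodule.smul_mem _ A (cos_mul_sub_mem n τ)) hf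
  refine not_forall_neg_one_pow_mul_pos hgT hc ?_ fun i _ ↦ ?_
  · obtain ⟨k, hk⟩ : ∃ k, 2 * n + 1 = k + 3 := ⟨2 * n - 2, by omega⟩
    have hk' : ((k + 1 : ℕ) : ℝ) ≤ 2 * n := by exact_mod_cast (by omega : k + 1 ≤ 2 * n)
    rw [hk]
    show τ + (k + 1 : ℕ) * (π / n) ≤ τ + 2 * π
    have : (2 * n : ℝ) * (π / n) = 2 * π := by field_simp
    nlinarith
  · match i with
    | 0 => simpa using hwave 0
    | 1 =>
      show 0 < (-1) ^ 1 * (A * cos (n * (θ - τ)) - f θ)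
      rw [hτ, sub_sub_cancel, hθ]; linarith
    | 2 =>
      show 0 < (-1) ^ 2 * (A * cos (n * (θ + δ - τ)) - f (θ + δ))
      rw [hτ, show θ + δ - (θ - ρ) = δ + ρ by ring]; linarith
    | k + 3 =>
      show 0 < (-1) ^ (k + 3) * g (τ + (k + 1 : ℕ) * (π / n))
      rw [show (-1 : ℝ) ^ (k + 3) = (-1) ^ (k + 1) by ring]
      exact hwave (k + 1)

lemma mul_cos_le_apply_add {n : ℕ} {f : ℝ → ℝ} (hf : f ∈ trigPolyDegreeLE n)
    {S θ δ : ℝ} (hS : ∀ x, |f x| ≤ S) (hθ : f θ = S) (hδ₀ : 0 ≤ δ) (hδ : δ < π / n) :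
    S * cos (n * δ) ≤ f (θ + δ) := by
  by_contra! hlt
  rcases hδ₀.eq_or_lt with rfl | hδ₀
  · simp [hθ] at hlt
  have hn : 0 < n := Nat.pos_of_ne_zero fun h ↦ by simp [h] at hδ; linarith
  have hSpos : 0 < S := by
    have := abs_le.mp (hS (θ + δ))
    nlinarith [cos_le_one (n * δ), abs_nonneg (f θ), hS θ]
  obtain ⟨ρ, hρ, hδρ, hρlt⟩ : ∃ ρ > 0, δ + ρ < π / n ∧ f (θ + δ) < S * cos (n * (δ + ρ)) :=
    Eventually.exists_gt <|
      (((continuous_const_add δ).tendsto' 0 δ (add_zero δ)).eventually_lt_const hδ).and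
      (((by fun_prop : Continuous fun ρ ↦ S * cos (n * (δ + ρ))).tendsto' 0 _
        (by simp)).eventually_const_lt hlt)
  have hcosρ : cos (n * ρ) < 1 := by
    have hnρ : n * ρ < π := by rw [← lt_div_iff₀' (by positivity)]; linarith
    simpa using cos_lt_cos_of_nonneg_of_le_pi le_rfl hnρ.le (by positivity)
  obtain ⟨A, hA, hAρ, hAδρ⟩ :
      ∃ A > S, A * cos (n * ρ) < S ∧ f (θ + δ) < A * cos (n * (δ + ρ)) :=
    Eventually.exists_gt <|
      (((by fun_prop : Continuous fun A ↦ A * cos (n * ρ)).tendsto S).eventually_lt_const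
        (by nlinarith)).and
      (((by fun_prop : Continuous fun A ↦ A * cos (n * (δ + ρ))).tendsto S).eventually_const_lt
        hρlt)
  exact (mul_cos_add_le_apply_add hn hf hS hθ hA hAρ hρ hδ₀ hδρ).not_gt hAδρ

end trigPolyDegreeLE

lemma mul_cos_le_abs_eval_cos_add {p : ℝ[X]} {n : ℕ} (hp : p.natDegree ≤ n) {S θ δ : ℝ}
    (hS : ∀ x ∈ Icc (-1 : ℝ) 1, |p.eval x| ≤ S) (hθ : |p.eval (cos θ)| = S) (hδ : |δ| < π / n) :
    S * cos (n * δ) ≤ |p.eval (cos (θ + δ))| := by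
  wlog hδ₀ : 0 ≤ δ generalizing θ δ
  · have := this (θ := -θ) (δ := -δ) (by rwa [cos_neg]) (by rwa [abs_neg]) (by linarith)
    rwa [mul_neg, cos_neg, ← neg_add, cos_neg] at this
  have hf := trigPolyDegreeLE.eval_cos_mem hp
  have hbound : ∀ x, |p.eval (cos x)| ≤ S := fun x ↦ hS _ (cos_mem_Icc x)
  have hδ' : δ < π / n := (le_abs_self δ).trans_lt hδ
  rcases abs_choice (p.eval (cos θ)) with h | h
  · exact (trigPolyDegreeLE.mul_cos_le_apply_add hf hbound (θ := θ) (h ▸ hθ) hδ₀ hδ').trans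
      (le_abs_self _)
  · exact (trigPolyDegreeLE.mul_cos_le_apply_add (neg_mem hf) (by simpa using hbound) (θ := θ)
      (by simpa [← h]) hδ₀ hδ').trans (by simpa using neg_le_abs _)

lemma exists_nat_lt_abs_sub_add_half_le {k : ℕ} (hk : 0 < k) {x : ℝ} (hx : x ∈ Icc 0 (k : ℝ)) :
    ∃ j < k, |x - (j + 1 / 2)| ≤ 1 / 2 := by
  rcases hx.2.lt_or_eq with hlt | rfl
  · refine ⟨⌊x⌋₊, (Nat.floor_lt hx.1).2 hlt, abs_le.2 ⟨?_, ?_⟩⟩ <;>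
      linarith [Nat.floor_le hx.1, Nat.lt_floor_add_one x]
  · refine ⟨k - 1, by omega, ?_⟩
    rw [Nat.cast_sub hk, Nat.cast_one, show (k : ℝ) - (k - 1 + 1 / 2) = 1 / 2 by ring]
    norm_num

lemma exists_abs_sub_chebyshev_node_le {k : ℕ} (hk : 0 < k) {θ : ℝ} (hθ : θ ∈ Icc 0 π) :
    ∃ j < k, |(2 * j + 1) * π / (2 * k) - θ| ≤ π / (2 * k) := by
  obtain ⟨j, hj, h⟩ := exists_nat_lt_abs_sub_add_half_le hk (x := θ * k / π)
    ⟨by have := hθ.1; positivity, by rw [div_le_iff₀ pi_pos]; nlinarith [hθ.2]⟩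
  refine ⟨j, hj, ?_⟩
  have hkR : (0 : ℝ) < k := by exact_mod_cast hk
  have : (2 * j + 1) * π / (2 * k) - θ = π / k * -(θ * k / π - (j + 1 / 2)) := by
    field_simp; ring
  rw [this, abs_mul, abs_neg, abs_of_pos (by positivity)]
  calc π / k * |θ * k / π - (j + 1 / 2)| ≤ π / k * (1 / 2) := by gcongr
    _ = π / (2 * k) := by ring

lemma exists_mul_cos_le_abs_eval_chebyshev_node {m n : ℕ} (hm : 0 < m) (hn : 0 < n)
    {p : ℝ[X]} (hp : p.natDegree ≤ n) {S θ : ℝ} (hS : ∀ x ∈ Icc (-1 : ℝ) 1, |p.eval x| ≤ S)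
    (hθ : θ ∈ Icc 0 π) (hpθ : |p.eval (cos θ)| = S) :
    ∃ j < m * n, S * cos (π / (2 * m)) ≤ |p.eval (cos ((2 * j + 1) * π / (2 * m * n)))| := by
  have hmR : (1 : ℝ) ≤ m := by exact_mod_cast hm
  have hnR : (0 : ℝ) < n := by exact_mod_cast hn
  obtain ⟨j, hj, hnear⟩ := exists_abs_sub_chebyshev_node_le (Nat.mul_pos hm hn) hθ
  rw [Nat.cast_mul, ← mul_assoc] at hnear
  set φ := (2 * (j : ℝ) + 1) * π / (2 * m * n)
  have hclose : n * |φ - θ| ≤ π / (2 * m) :=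
    calc n * |φ - θ| ≤ n * (π / (2 * m * n)) := by gcongr
      _ = π / (2 * m) := by field_simp
  have hcos : cos (π / (2 * m)) ≤ cos (n * (φ - θ)) := by
    rw [← cos_abs (n * (φ - θ)), abs_mul, abs_of_pos hnR]
    refine cos_le_cos_of_nonneg_of_le_pi (by positivity) ?_ hclose
    exact div_le_self pi_pos.le (by linarith)
  refine ⟨j, hj, ?_⟩
  have hkey := mul_cos_le_abs_eval_cos_add hp (δ := φ - θ) hS hpθ (by
    rw [lt_div_iff₀' hnR]; linarith [div_lt_self pi_pos (by linarith : (1 : ℝ) < 2 * m)])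
  rw [add_sub_cancel] at hkey
  exact (mul_le_mul_of_nonneg_left hcos (hpθ ▸ abs_nonneg _)).trans hkey

theorem chebyshev_points_norming (m n : ℕ) (hm : 1 < m) (hn : 0 < n)
    (p : Polynomial ℝ) (hp : p.natDegree ≤ n) :
    ∀ x ∈ Set.Icc (-1 : ℝ) 1,
      |p.eval x| ≤ (1 / Real.cos (π / (2 * m))) *
        ⨆ j : Fin (m * n),
          |p.eval (Real.cos ((2 * (j : ℝ) + 1) * π / (2 * (m : ℝ) * n)))| := by
  intro x hx
  obtain ⟨x₀, hx₀, hmax⟩ := (isCompact_Icc (a := -1) (b := 1)).exists_isMaxOn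
    (nonempty_Icc.2 (by norm_num)) (continuous_abs.comp p.continuous).continuousOn
  obtain ⟨j, hj, hnode⟩ := exists_mul_cos_le_abs_eval_chebyshev_node (m := m) (by omega) hn hp hmax
    ⟨arccos_nonneg x₀, arccos_le_pi x₀⟩ (by rw [cos_arccos hx₀.1 hx₀.2]; rfl)
  have hcos_pos : 0 < cos (π / (2 * m)) := by
    have hmR : (1 : ℝ) < m := by exact_mod_cast hm
    refine cos_pos_of_mem_Ioo ⟨by linarith [pi_pos, (by positivity : 0 < π / (2 * m))], ?_⟩
    exact div_lt_div_of_pos_left pi_pos (by norm_num) (by linarith)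
  rw [one_div, inv_mul_eq_div, le_div_iff₀ hcos_pos]
  calc |p.eval x| * cos (π / (2 * m)) ≤ |p.eval x₀| * cos (π / (2 * m)) :=
        mul_le_mul_of_nonneg_right (hmax hx) hcos_pos.le
    _ ≤ _ := hnode.trans <| le_ciSup (f := fun j : Fin (m * n) ↦
          |p.eval (cos ((2 * (j : ℝ) + 1) * π / (2 * (m : ℝ) * n)))|)
        (Set.finite_range _).bddAbove ⟨j, hj⟩
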